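/- There exists an edge-coloring of the complete graph on the positive integers that contains a rainbow k-cycle for every integer k ≥ 3 with k ≢ 2 (mod 4), but contains no rainbow cycle whose length is congruent to 2 modulo 4. -/

import Mathlib

/-- A rainbow cycle: `n` pairwise distinct vertices (given as an injective map
`v : Fin n → V`) such that the `n` edge colors `col (v i) (v (i+1))`
(indices cyclic mod `n`) are pairwise distinct. -/
def IsRainbowCycle {V C : Type*} {n : ℕ} (col : V → V → C) (v : Fin n → V) : Prop :=
  Function.Injective v ∧
    Function.Injective (fun i : Fin n =>
      col (v i) (v ⟨(i.val + 1) % n, Nat.mod_lt _ i.pos⟩))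

/-- An edge-coloring `col` contains a rainbow `n`-cycle. -/
def ContainsRainbowCycle {V C : Type*} (col : V → V → C) (n : ℕ) : Prop :=
  ∃ v : Fin n → V, IsRainbowCycle col v

/-!
Colour the edge `xy` by residues mod 4: colour `x` if `y ≡ x + 1`, colour `y` if `x ≡ y + 1`,
and one common colour `none` otherwise. The path `1, 2, …, k` closed by the edge `k1` is then
rainbow unless `k ≡ 2 (mod 4)`, since its closing edge gets the colour `k` or `none`.

Conversely, along a rainbow cycle `v` of even length the residue steps `r (v (i + 1)) - r (v i)`
sum to `0`. A `none` edge has an even step and every other edge has step `±1`; as at most one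
edge is `none`, there is no `none` edge at all. An edge coloured by its head forces the next one
to be coloured by its head too, so all steps are `1` or all are `-1`, and their sum `±k`
vanishes only if `4 ∣ k`.
-/

open Function

namespace Fin

theorem mk_add_one_mod_eq {n : ℕ} [NeZero n] (i : Fin n) :
    (⟨(i.val + 1) % n, Nat.mod_lt _ i.pos⟩ : Fin n) = i + 1 :=
  Fin.ext <| by rw [Fin.val_add, Fin.val_one', Nat.add_mod_mod]

theorem sum_add_one_sub {n : ℕ} [NeZero n] {G : Type*} [AddCommGroup G] (f : Fin n → G) :
    ∑ i, (f (i + 1) - f i) = 0 := by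
  rw [Finset.sum_sub_distrib, sub_eq_zero]
  exact Equiv.sum_comp (Equiv.addRight 1) f

open Fin.NatCast in
theorem forall_of_imp_add_one {n : ℕ} [NeZero n] {P : Fin n → Prop}
    (h : ∀ i, P i → P (i + 1)) {i₀ : Fin n} (h₀ : P i₀) (j : Fin n) : P j := by
  have key : ∀ m : ℕ, P (i₀ + (m : Fin n)) := by
    intro m
    induction m with
    | zero => simpa using h₀
    | succ m ih => simpa [Nat.cast_succ, ← add_assoc] using h _ ih
  simpa using key (j - i₀).val

end Fin

theorem isRainbowCycle_iff {V C : Type*} {n : ℕ} [NeZero n] (col : V → V → C) (v : Fin n → V) :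
    IsRainbowCycle col v ↔ Injective v ∧ Injective fun i => col (v i) (v (i + 1)) := by
  simp only [IsRainbowCycle, Fin.mk_add_one_mod_eq]

section SuccColoring

variable {V : Type*} (r : V → ZMod 4)

def succColoring (x y : V) : Option V :=
  if r y = r x + 1 then some x else if r x = r y + 1 then some y else none

theorem succColoring_comm (x y : V) : succColoring r x y = succColoring r y x := by
  unfold succColoring
  split_ifs <;> first | rfl | grind

theorem succColoring_cases (x y : V) :
    succColoring r x y = some x ∧ r y - r x = 1 ∨
      succColoring r x y = some y ∧ r y - r x = -1 ∨
      succColoring r x y = none ∧ 2 * (r y - r x) = 0 := by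
  unfold succColoring
  split_ifs with h₁ h₂
  · exact .inl ⟨rfl, by rw [h₁]; ring⟩
  · exact .inr <| .inl ⟨rfl, by rw [h₂]; ring⟩
  · refine .inr <| .inr ⟨rfl, ?_⟩
    revert h₁ h₂
    generalize r x = a
    generalize r y = b
    revert a b
    decide

theorem succColoring_eq_some_or_eq_none {x y : V} (h : r x ≠ r y + 1) :
    succColoring r x y = some x ∨ succColoring r x y = none := by
  unfold succColoring
  split_ifs <;> simp_all

section Cycle

variable {r} {k : ℕ} [NeZero k] {v : Fin k → V}

theorem succColoring_ne_none_of_even (hk : Even k)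
    (hc : Injective fun i => succColoring r (v i) (v (i + 1))) (i : Fin k) :
    succColoring r (v i) (v (i + 1)) ≠ none := by
  intro hi
  have hstep : ∀ j, 2 * (r (v (j + 1)) - r (v j)) = 2 - if j = i then 2 else 0 := by
    intro j
    rcases succColoring_cases r (v j) (v (j + 1)) with ⟨hj, hd⟩ | ⟨hj, hd⟩ | ⟨hj, hd⟩
    · rw [if_neg (by rintro rfl; simp_all), hd]; rfl
    · rw [if_neg (by rintro rfl; simp_all), hd]; rfl
    · rw [if_pos (hc (hj.trans hi.symm)), hd]; rfl
  have hk2 : (k : ZMod 4) * 2 = 0 := by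
    obtain ⟨m, rfl⟩ := hk
    grind
  have hsum : ∑ j, 2 * (r (v (j + 1)) - r (v j)) = 0 := by
    rw [← Finset.mul_sum, Fin.sum_add_one_sub fun j => r (v j), mul_zero]
  simp only [hstep, Finset.sum_sub_distrib, Finset.sum_ite_eq', Finset.sum_const,
    Finset.card_univ, Fintype.card_fin, nsmul_eq_mul, hk2, Finset.mem_univ, if_true] at hsum
  exact absurd hsum (by decide)

theorem succColoring_steps_eq_one_or_neg_one
    (hc : Injective fun i => succColoring r (v i) (v (i + 1)))
    (hnone : ∀ i, succColoring r (v i) (v (i + 1)) ≠ none) :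
    (∀ i, r (v (i + 1)) - r (v i) = 1) ∨ ∀ i, r (v (i + 1)) - r (v i) = -1 := by
  have hcases : ∀ i, succColoring r (v i) (v (i + 1)) = some (v i) ∧ r (v (i + 1)) - r (v i) = 1 ∨
      succColoring r (v i) (v (i + 1)) = some (v (i + 1)) ∧ r (v (i + 1)) - r (v i) = -1 :=
    fun i => (succColoring_cases r _ _).imp_right (·.resolve_right fun h => hnone i h.1)
  by_cases hneg : ∃ i₀, r (v (i₀ + 1)) - r (v i₀) = -1
  · obtain ⟨i₀, h₀⟩ := hneg
    refine .inr (Fin.forall_of_imp_add_one (fun i hi => ?_) h₀)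
    rcases hcases (i + 1) with ⟨hnext, -⟩ | ⟨-, hd⟩
    · have hhead : succColoring r (v i) (v (i + 1)) = some (v (i + 1)) :=
        ((hcases i).resolve_left fun h => absurd (h.2.symm.trans hi) (by decide)).1
      have hloop : i = i + 1 := hc (hhead.trans hnext.symm)
      rw [← hloop]
      exact hi
    · exact hd
  · simp only [not_exists] at hneg
    exact .inl fun i => ((hcases i).resolve_right fun h => hneg i h.2).2

end Cycle

theorem not_containsRainbowCycle_succColoring {k : ℕ} (hk : k % 4 = 2) :
    ¬ ContainsRainbowCycle (succColoring r) k := by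
  have : NeZero k := ⟨by omega⟩
  rintro ⟨v, hv⟩
  have hc := ((isRainbowCycle_iff _ v).1 hv).2
  have hsum := Fin.sum_add_one_sub fun i => r (v i)
  have hk2 : (k : ZMod 4) = 2 := by rw [← ZMod.natCast_mod, hk]; rfl
  rcases succColoring_steps_eq_one_or_neg_one hc
      (succColoring_ne_none_of_even (Nat.even_iff.2 (by omega)) hc) with h | h <;>
    simp only [h, Finset.sum_const, Finset.card_univ, Fintype.card_fin, nsmul_eq_mul, hk2] at hsum <;>
    exact absurd hsum (by decide)

end SuccColoring

theorem containsRainbowCycle_succColoring_pnat {k : ℕ} (hk : k % 4 ≠ 2) :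
    ContainsRainbowCycle (succColoring fun x : ℕ+ => ((x : ℕ) : ZMod 4)) k := by
  obtain _ | n := k
  · exact ⟨Fin.elim0, injective_of_subsingleton _, injective_of_subsingleton _⟩
  set r : ℕ+ → ZMod 4 := fun x => ((x : ℕ) : ZMod 4)
  set v : Fin (n + 1) → ℕ+ := fun i => Nat.succPNat i
  have hv : Injective v := fun i j h => Fin.ext (by simpa [v] using h)
  have hcol : ∀ i, succColoring r (v i) (v (i + 1)) = some (v i) ∨
      succColoring r (v i) (v (i + 1)) = none ∧ i = Fin.last n := by
    intro i
    by_cases hi : i = Fin.last n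
    · subst hi
      refine (succColoring_eq_some_or_eq_none r fun h => hk ?_).imp_right (⟨·, rfl⟩)
      have h2 : ((n + 1 : ℕ) : ZMod 4) = 2 := by simpa [r, v, one_add_one_eq_two] using h
      rw [← ZMod.val_natCast, h2]
      rfl
    · left
      unfold succColoring
      rw [if_pos]
      simp [r, v, Fin.val_add_one, hi]
  refine ⟨v, (isRainbowCycle_iff _ v).2 ⟨hv, fun i j hij => ?_⟩⟩
  rcases hcol i with hi | ⟨hi, rfl⟩ <;> rcases hcol j with hj | ⟨hj, rfl⟩
  · exact hv (Option.some_injective _ (hi.symm.trans (hij.trans hj)))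
  · simp_all
  · simp_all
  · rfl

/-- There is a symmetric edge-coloring of the complete graph on the positive integers
containing rainbow `k`-cycles for all `k ≥ 3` with `k ≢ 2 (mod 4)`, but containing no
rainbow cycle of length `≡ 2 (mod 4)`. -/
theorem exists_coloring_not_two_mod_four : ∃ (C : Type) (col : ℕ+ → ℕ+ → C),
    (∀ x y, col x y = col y x) ∧
    (∀ k : ℕ, 3 ≤ k → k % 4 ≠ 2 → ContainsRainbowCycle col k) ∧
    (∀ k : ℕ, 3 ≤ k → k % 4 = 2 → ¬ ContainsRainbowCycle col k) :=
  ⟨Option ℕ+, succColoring fun x => ((x : ℕ) : ZMod 4), succColoring_comm _,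
    fun _ _ hk => containsRainbowCycle_succColoring_pnat hk,
    fun _ _ hk => not_containsRainbowCycle_succColoring _ hk⟩
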